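/- Let M ⊆ ℕ be a finite nonempty set which is compatible with a tuple (≻_p)_{p∈P} of excellent orders, where P ⊇ 𝒫(M) is a finite set of primes. Then: the underlying undirected graph of (M, E(M)) is connected; (M, E(M)) satisfies property (S_p) for every prime p; and M satisfies condition (I). (Lemma 2.7 (b)) -/

import Mathlib

open Polynomial TensorProduct

namespace WeightPaper

/-! ### Directed graphs on finite sets of natural numbers -/

/-- A `p`-edge from `m₁` to `m₂`: `p` is prime, `m₂ ∣ m₁` and `m₁/m₂` is a
positive power of `p`. -/
def PEdge (p m₁ m₂ : ℕ) : Prop :=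
  p.Prime ∧ m₂ ∣ m₁ ∧ ∃ e : ℕ, 1 ≤ e ∧ m₁ = m₂ * p ^ e

/-- An edge of the graph `(M, E(M))` (forgetting the prime). -/
def GEdge (m₁ m₂ : ℕ) : Prop := ∃ p : ℕ, PEdge p m₁ m₂

/-- The undirected graph on the vertex set `M` underlying a directed edge
relation `E`. -/
def graphOn (M : Finset ℕ) (E : ℕ → ℕ → Prop) : SimpleGraph {x : ℕ // x ∈ M} where
  Adj a b := a ≠ b ∧ (E a.1 b.1 ∨ E b.1 a.1)
  symm := ⟨fun a b h => ⟨Ne.symm h.1, Or.symm h.2⟩⟩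
  loopless := ⟨fun a h => h.1 rfl⟩

/-- The underlying undirected graph of `(M, E(M))`. -/
def fullGraph (M : Finset ℕ) : SimpleGraph {x : ℕ // x ∈ M} := graphOn M GEdge

/-- The underlying undirected graph of `(M, E(M))` with all `p`-edges removed.
Its connected components are the `p`-planes. -/
def planeGraph (M : Finset ℕ) (p : ℕ) : SimpleGraph {x : ℕ // x ∈ M} :=
  graphOn M (fun a b => GEdge a b ∧ ¬ PEdge p a b)

/-- A highest `p`-plane: a `p`-plane at no vertex of which a `p`-edge ends. -/
def IsHighestPPlane (M : Finset ℕ) (p : ℕ) (c : (planeGraph M p).ConnectedComponent) : Prop :=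
  ∀ (m₁ : ℕ), m₁ ∈ M → ∀ (m₂ : ℕ) (h₂ : m₂ ∈ M),
    PEdge p m₁ m₂ → (planeGraph M p).connectedComponentMk ⟨m₂, h₂⟩ ≠ c

/-- Property `(T_p)`: there is exactly one highest `p`-plane. -/
def PropT (M : Finset ℕ) (p : ℕ) : Prop := ∃! c, IsHighestPPlane M p c

/-- A highest `p`-edge (in `M`): a `p`-edge from `m₁` to `m₂` such that no
`p`-edge of the graph ends at `m₁`. -/
def IsHighestPEdge (M : Finset ℕ) (p m₁ m₂ : ℕ) : Prop :=
  PEdge p m₁ m₂ ∧ ∀ m₀ ∈ M, ¬ PEdge p m₀ m₁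

/-- The underlying undirected graph of `(M, E(M))` with all highest `p`-edges
removed. -/
def spGraph (M : Finset ℕ) (p : ℕ) : SimpleGraph {x : ℕ // x ∈ M} :=
  graphOn M (fun a b => GEdge a b ∧ ¬ IsHighestPEdge M p a b)

/-- Property `(S_p)`: the graph `(M, E(M) - {highest p-edges})` has at most two
connected components. -/
def PropS (M : Finset ℕ) (p : ℕ) : Prop :=
  ∀ c₁ c₂ c₃ : (spGraph M p).ConnectedComponent, c₁ = c₂ ∨ c₁ = c₃ ∨ c₂ = c₃

/-- Condition (I). -/
def ConditionI (M : Finset ℕ) : Prop :=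
  (fullGraph M).Connected ∧ PropS M 2 ∧ ∀ p : ℕ, p.Prime → 3 ≤ p → PropT M p

/-- The vertex set of a connected component of `(M, E(M))`, as a `Finset ℕ`. -/
noncomputable def compSet (M : Finset ℕ) (c : (fullGraph M).ConnectedComponent) : Finset ℕ :=
  @Finset.filter ℕ (fun m => ∃ h : m ∈ M, (fullGraph M).connectedComponentMk ⟨m, h⟩ = c)
    (Classical.decPred _) M

/-- Condition (II). -/
def ConditionII (M : Finset ℕ) : Prop :=
  ∃ c₁ c₂ : (fullGraph M).ConnectedComponent, c₁ ≠ c₂ ∧ (∀ c, c = c₁ ∨ c = c₂) ∧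
    (∀ m₁ ∈ compSet M c₁, ∀ m₂ ∈ compSet M c₁, ¬ PEdge 2 m₁ m₂) ∧
    (∀ m₁ ∈ compSet M c₂, ∀ m₂ ∈ compSet M c₂, ¬ PEdge 2 m₁ m₂) ∧
    (∀ p : ℕ, p.Prime → 3 ≤ p → PropT (compSet M c₁) p ∧ PropT (compSet M c₂) p) ∧
    (Nat.gcd ((compSet M c₁).lcm id) ((compSet M c₂).lcm id) = 1 ∨
      Nat.gcd ((compSet M c₁).lcm id) ((compSet M c₂).lcm id) = 2) ∧
    ((compSet M c₁).lcm id).factorization 2 < ((compSet M c₂).lcm id).factorization 2 ∧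
    (((compSet M c₁).lcm id).factorization 2 = 0 ∨ ((compSet M c₁).lcm id).factorization 2 = 1)

/-! ### Excellent orders -/

/-- An excellent order on `{0, 1, …, s}`, given by its data `s` and
`S(≻) ⊆ {1, …, s}`. -/
structure ExcellentOrder where
  s : ℕ
  S : Finset ℕ
  hS : S ⊆ Finset.Icc 1 s

/-- The strict order `a ≻ b` determined by an excellent order: the elements of
`S(≻)` come first, in decreasing natural order, then `0`, then the remaining
elements of `{0, …, s}`, in increasing natural order. -/
def ExcellentOrder.gt (E : ExcellentOrder) (a b : ℕ) : Prop :=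
  (a ∈ E.S ∧ b ∈ E.S ∧ b < a) ∨ (a ∈ E.S ∧ b ∉ E.S) ∨ (a ∉ E.S ∧ b ∉ E.S ∧ a < b)

/-- The maximal element `s⁺(≻)` of `{0, …, s}` with respect to `≻`. -/
noncomputable def ExcellentOrder.sPlus (E : ExcellentOrder) : ℕ :=
  if h : E.S.Nonempty then E.S.max' h else 0

/-- The tensor product of two excellent orders. -/
def ExcellentOrder.tensor (E₁ E₂ : ExcellentOrder) : ExcellentOrder where
  s := max E₁.s E₂.s
  S := (E₁.S ∪ E₂.S) \ (E₁.S ∩ E₂.S)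
  hS := by
    intro x hx
    simp only [Finset.mem_sdiff, Finset.mem_union] at hx
    rcases hx.1 with h | h
    · have h' := E₁.hS h
      simp only [Finset.mem_Icc] at h' ⊢
      omega
    · have h' := E₂.hS h
      simp only [Finset.mem_Icc] at h' ⊢
      omega

/-- A set `K ⊆ ℕ₀` is subset compatible with an excellent order `≻` on
`{0, …, s}` if `K = {0, …, s}` or `K = {k ∈ {0, …, s} | k ≻ k₀}` for some
`k₀ ∈ {0, …, s}`. -/
def SubsetCompatible (E : ExcellentOrder) (K : Set ℕ) : Prop :=
  K = {k : ℕ | k ≤ E.s} ∨ ∃ k₀ ≤ E.s, K = {k : ℕ | k ≤ E.s ∧ E.gt k k₀}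

/-- `π_p(m) = m · p^{-v_p(m)}`. -/
def piP (p m : ℕ) : ℕ := m / p ^ (m.factorization p)

/-- The quadrant `V((≻_p)_{p ∈ P})`. -/
def Vset (P : Finset ℕ) (exc : ℕ → ExcellentOrder) : Set ℕ :=
  { m : ℕ | ∃ k : ℕ → ℕ, (∀ p ∈ P, k p ≤ (exc p).s) ∧ m = ∏ p ∈ P, p ^ k p }

/-- The edge relation `E_V` of the graph `(V, E_V)`. -/
def EV (P : Finset ℕ) (exc : ℕ → ExcellentOrder) (ma mb : ℕ) : Prop :=
  ma ∈ Vset P exc ∧ mb ∈ Vset P exc ∧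
    ∃ p ∈ P, piP p ma = piP p mb ∧ (exc p).gt (ma.factorization p) (mb.factorization p)

/-- The center `v_V = ∏_{p ∈ P} p^{s⁺(≻_p)}`. -/
noncomputable def vV (P : Finset ℕ) (exc : ℕ → ExcellentOrder) : ℕ :=
  ∏ p ∈ P, p ^ (exc p).sPlus

/-- Compatibility of a finite nonempty set `M ⊆ ℕ` with a tuple of excellent
orders. -/
def FinsetCompatible (P : Finset ℕ) (exc : ℕ → ExcellentOrder) (M : Finset ℕ) : Prop :=
  (↑M : Set ℕ) ⊆ Vset P exc ∧
    ∀ p : ℕ, p.Prime → (∃ m ∈ M, p ∣ m) →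
      ∀ m₀ : ℕ, (∃ m ∈ M, m₀ = piP p m) →
        SubsetCompatible (exc p) {k : ℕ | m₀ * p ^ k ∈ M}

/-- Compatibility of a map `ψ : ℕ → ℕ₀` (with finite support) with a tuple of
excellent orders. -/
def PsiCompatible (P : Finset ℕ) (exc : ℕ → ExcellentOrder) (ψ : ℕ → ℕ) : Prop :=
  Function.support ψ ⊆ Vset P exc ∧ ∀ ma mb : ℕ, EV P exc ma mb → ψ mb ≤ ψ ma

/-- A covering `(M₁, …, M_l)` of `ψ`. -/
def IsCovering (ψ : ℕ → ℕ) {l : ℕ} (Ms : Fin l → Finset ℕ) : Prop :=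
  (∀ j, (Ms j).Nonempty) ∧
    ∀ m : ℕ, ψ m = (Finset.univ.filter (fun j => m ∈ Ms j)).card

/-- `l_ψ := max(ψ(m) | m ∈ ℕ)`. -/
noncomputable def lpsi (ψ : ℕ → ℕ) (h : (Function.support ψ).Finite) : ℕ :=
  h.toFinset.sup ψ

/-- The `j`-th set `M_j^{(st)} = {m | ψ(m) ≥ j}` of the standard covering. -/
noncomputable def stdCov (ψ : ℕ → ℕ) (h : (Function.support ψ).Finite) (j : ℕ) : Finset ℕ :=
  h.toFinset.filter (fun m => j ≤ ψ m)

/-! ### Paths and centers of directed graphs -/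

/-- A vertex `w` is a center of the directed graph `(W, E)`: the graph has no
path from any vertex to itself, and there is a path from `w` to every other
vertex. A path is a tuple `(w₁, …, w_l)`, `l ≥ 2`, of vertices with
`(w_j, w_{j+1}) ∈ E`. -/
def HasCenter (W : Set ℕ) (E : ℕ → ℕ → Prop) (w : ℕ) : Prop :=
  w ∈ W ∧
    (¬ ∃ (l : List ℕ) (x : ℕ), 2 ≤ l.length ∧ l.Chain' E ∧ (∀ y ∈ l, y ∈ W) ∧
        l.head? = some x ∧ l.getLast? = some x) ∧
    (∀ x ∈ W, x ≠ w → ∃ l : List ℕ, 2 ≤ l.length ∧ l.Chain' E ∧ (∀ y ∈ l, y ∈ W) ∧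
        l.head? = some w ∧ l.getLast? = some x)

/-! ### Orlik blocks -/

/-- The underlying `ℤ`-module of the Orlik block of `M`:
`ℤ[X]/(∏_{m ∈ M} Φ_m)`. -/
@[reducible] noncomputable def OrlikModule (M : Finset ℕ) : Type :=
  Polynomial ℤ ⧸ Ideal.span {∏ m ∈ M, Polynomial.cyclotomic m ℤ}

/-- The automorphism `h_M` of the Orlik block: multiplication by the class
of `X`. -/
noncomputable def hMap (M : Finset ℕ) : Module.End ℤ (OrlikModule M) :=
  LinearMap.mulLeft ℤ
    (Ideal.Quotient.mk (Ideal.span {∏ m ∈ M, Polynomial.cyclotomic m ℤ}) Polynomial.X)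

/-- The direct sum `⊕_i h_{M_i}` on `⊕_i H_{M_i}` (realized as a Pi type). -/
noncomputable def piHM {l : ℕ} (Ms : Fin l → Finset ℕ) :
    Module.End ℤ ((i : Fin l) → OrlikModule (Ms i)) :=
  LinearMap.pi (fun i => (hMap (Ms i)).comp (LinearMap.proj i))

/-- `Aut_{S¹}(H_M, h_M) = {± h_M^k | k ∈ ℤ}`: every `ℤ`-module automorphism of
`H_M` commuting with `h_M` all of whose complex eigenvalues lie on the unit
circle is `± h_M^k` for some `k ∈ ℤ` (written here as
`φ ∘ h_M^l = ± h_M^k` with `k, l ∈ ℕ`). -/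
def AutIsSmall (M : Finset ℕ) : Prop :=
  ∀ φ : OrlikModule M ≃ₗ[ℤ] OrlikModule M,
    (φ.toLinearMap * hMap M = hMap M * φ.toLinearMap) →
    (∀ μ : ℂ, Module.End.HasEigenvalue (LinearMap.baseChange ℂ φ.toLinearMap) μ →
      ‖μ‖ = 1) →
    ∃ k l : ℕ, φ.toLinearMap * (hMap M) ^ l = (hMap M) ^ k ∨
      φ.toLinearMap * (hMap M) ^ l = - ((hMap M) ^ k)

/-! ### Tensor products of polynomials and of finitely supported maps -/

/-- The tensor product `f ⊗ g = ∏_{i,j} (t - κ_i λ_j)` of two unitary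
polynomials with roots `κ_i` resp. `λ_j`. -/
noncomputable def polyTensor (f g : Polynomial ℂ) : Polynomial ℂ :=
  ((f.roots.bind (fun κ => g.roots.map (fun μ => κ * μ))).map
    (fun r => Polynomial.X - Polynomial.C r)).prod

/-- `∏_{m} Φ_m^{ψ(m)}` over `ℂ`. -/
noncomputable def cycProd (ψ : ℕ → ℕ) (h : (Function.support ψ).Finite) : Polynomial ℂ :=
  ∏ m ∈ h.toFinset, (Polynomial.cyclotomic m ℂ) ^ (ψ m)

/-! ### Weight systems -/

/-- Condition (C2). -/
def CondC2 {n : ℕ} (v : Fin n → ℕ) (d : ℕ) : Prop :=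
  ∀ J : Finset (Fin n), J.Nonempty → ∃ K : Finset (Fin n), K.card = J.card ∧
    ∀ k ∈ K, ∃ α : Fin n → ℕ, ∑ i ∈ J, α i * v i = d - v k

/-- Condition (C2bar). -/
def CondC2bar {n : ℕ} (v : Fin n → ℕ) (d : ℕ) : Prop :=
  ∀ J : Finset (Fin n), J.Nonempty → ∃ K : Finset (Fin n), K.card = J.card ∧
    ∀ k ∈ K, ∃ α : Fin n → ℤ, ∑ i ∈ J, α i * (v i : ℤ) = (d : ℤ) - (v k : ℤ)

/-- The characteristic polynomial `Δ` of the monodromy, built from the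
generating polynomial `Q = ρ_{(v;d)} ∈ ℤ[t]`:
`Δ = ∏_k (t - e^{2πik/d})^{coeff_k Q}`. -/
noncomputable def Delta (d : ℕ) (Q : Polynomial ℤ) : Polynomial ℂ :=
  ∏ k ∈ Finset.range (Q.natDegree + 1),
    (Polynomial.X - Polynomial.C (Complex.exp (2 * Real.pi * Complex.I * k / d))) ^
      (Q.coeff k).toNat

/-- `ψ_w(m)`: the multiplicity of `e^{2πi/m}` as a root of `Δ` (and `0` for
`m = 0`). -/
noncomputable def psiW (d : ℕ) (Q : Polynomial ℤ) (m : ℕ) : ℕ :=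
  if m = 0 then 0
  else (Delta d Q).rootMultiplicity (Complex.exp (2 * Real.pi * Complex.I / m))

/-- The excellent order `≻_p^w` of Theorem 6.6, for the set `Mw = supp ψ_w`
and the reduced denominators `t_j` of the weights. -/
noncomputable def excW {n : ℕ} (t : Fin n → ℕ) (Mw : Finset ℕ) (p : ℕ) : ExcellentOrder where
  s := Mw.sup (fun m => m.factorization p)
  S := (Finset.Icc 1 (Mw.sup (fun m => m.factorization p))).filter
    (fun k => Odd ((Finset.univ.filter (fun j : Fin n => p ^ k ∣ t j)).card))
  hS := Finset.filter_subset _ _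

/-- The weighted-degree-`k` part `W_k` of `ℂ[x_1, …, x_n]`: the subspace of
polynomials all of whose monomials `x^α` satisfy `∑ v_i α_i = k`. -/
noncomputable def weightedHomog (n : ℕ) (v : Fin n → ℕ) (k : ℕ) : Submodule ℂ (MvPolynomial (Fin n) ℂ) where
  carrier := { f | ∀ α ∈ f.support, ∑ i, v i * α i = k }
  add_mem' := by
    intro a b ha hb α hα
    rcases Finset.mem_union.mp (MvPolynomial.support_add hα) with h | h
    · exact ha α h
    · exact hb α h
  zero_mem' := by
    intro α hα
    simp at hα
  smul_mem' := by
    intro c f hf α hα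
    exact hf α (MvPolynomial.support_smul hα)

/-! Compatibility makes the `q`-columns `{k | m₀ q^k ∈ M}` of `M` nested, because the sets
compatible with an excellent order are final segments of a linear order. Hence two elements of `M`
can be joined by changing one prime exponent at a time: this gives connectivity, and shows that the
`p`-planes are exactly the levels `v_p = const`. The top `p`-level is then the unique highest
`p`-plane, and two vertices below it are joined by a `p`-edge inside a column reaching the top
level; such an edge is not highest, which gives `(S_p)`. -/

open SimpleGraph

/-- Elements of `S(≻)` get rank `a ≥ 1` and the others rank `-a-1 ≤ -1`, so that `≻` is pulled
back from `<` on `ℤ`. -/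
def ExcellentOrder.rank (E : ExcellentOrder) (a : ℕ) : ℤ :=
  if a ∈ E.S then a else -a - 1

theorem ExcellentOrder.gt_iff_rank_lt (E : ExcellentOrder) (a b : ℕ) :
    E.gt a b ↔ E.rank b < E.rank a := by
  unfold ExcellentOrder.gt ExcellentOrder.rank
  split_ifs <;> simp_all
  omega

theorem SubsetCompatible.subset_or_subset {E : ExcellentOrder} {K₁ K₂ : Set ℕ}
    (h₁ : SubsetCompatible E K₁) (h₂ : SubsetCompatible E K₂) : K₁ ⊆ K₂ ∨ K₂ ⊆ K₁ := by
  rcases h₁ with rfl | ⟨k₁, -, rfl⟩ <;> rcases h₂ with rfl | ⟨k₂, -, rfl⟩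
  · exact Or.inl subset_rfl
  · exact Or.inr fun k hk => hk.1
  · exact Or.inl fun k hk => hk.1
  · simp only [ExcellentOrder.gt_iff_rank_lt]
    rcases le_total (E.rank k₁) (E.rank k₂) with h | h
    · exact Or.inr fun k hk => ⟨hk.1, h.trans_lt hk.2⟩
    · exact Or.inl fun k hk => ⟨hk.1, h.trans_lt hk.2⟩

/-- The set `K_{M,p,m₀}`. -/
def exponentSet (M : Finset ℕ) (p m₀ : ℕ) : Set ℕ := {k | m₀ * p ^ k ∈ M}

theorem piP_mul_pow_factorization (p m : ℕ) : piP p m * p ^ m.factorization p = m := by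
  rw [piP, mul_comm]
  exact Nat.ordProj_mul_ordCompl_eq_self m p

theorem factorization_piP_mul_pow {p m : ℕ} (hp : p.Prime) (hm : m ≠ 0) (k : ℕ) :
    (piP p m * p ^ k).factorization = m.factorization.update p k := by
  rw [piP, Nat.factorization_mul (Nat.ordCompl_pos p hm).ne' (pow_ne_zero k hp.ne_zero),
    hp.factorization_pow, Nat.factorization_ordCompl]
  ext r
  by_cases hr : r = p
  · simp [hr]
  · simp [hr, Finsupp.update_apply]

theorem factorization_piP_mul_pow_self {p m : ℕ} (hp : p.Prime) (hm : m ≠ 0) (k : ℕ) :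
    (piP p m * p ^ k).factorization p = k := by
  simp [factorization_piP_mul_pow hp hm]

theorem PEdge.factorization_eq {p x y : ℕ} (h : PEdge p x y) (hy : y ≠ 0) :
    ∃ e, 1 ≤ e ∧ x.factorization = y.factorization + Finsupp.single p e := by
  obtain ⟨hp, -, e, he, rfl⟩ := h
  exact ⟨e, he, by rw [Nat.factorization_mul hy (pow_ne_zero e hp.ne_zero), hp.factorization_pow]⟩

theorem PEdge.factorization_lt {p x y : ℕ} (h : PEdge p x y) (hy : y ≠ 0) :
    y.factorization p < x.factorization p := by
  obtain ⟨e, he, hxy⟩ := h.factorization_eq hy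
  simp only [hxy, Finsupp.add_apply, Finsupp.single_eq_same]
  omega

theorem PEdge.factorization_eq_of_ne {p x y r : ℕ} (h : PEdge p x y) (hy : y ≠ 0) (hr : r ≠ p) :
    x.factorization r = y.factorization r := by
  obtain ⟨e, -, hxy⟩ := h.factorization_eq hy
  simp [hxy, Ne.symm hr]

theorem PEdge.ne {p x y : ℕ} (h : PEdge p x y) (hy : y ≠ 0) : x ≠ y :=
  fun hxy => (h.factorization_lt hy).ne (by rw [hxy])

theorem pEdge_mul_pow {p : ℕ} (hp : p.Prime) (c : ℕ) {i j : ℕ} (hij : i < j) :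
    PEdge p (c * p ^ j) (c * p ^ i) :=
  ⟨hp, mul_dvd_mul_left c (pow_dvd_pow p hij.le), j - i, by omega,
    by rw [mul_assoc, ← pow_add, Nat.add_sub_cancel' hij.le]⟩

section Columns

variable {M P : Finset ℕ} {exc : ℕ → ExcellentOrder}

theorem FinsetCompatible.exponentSet_subset_or_subset (hcomp : FinsetCompatible P exc M)
    {p : ℕ} (hp : p.Prime) (hdvd : ∃ a ∈ M, p ∣ a) {m m' : ℕ} (hm : m ∈ M) (hm' : m' ∈ M) :
    exponentSet M p (piP p m) ⊆ exponentSet M p (piP p m') ∨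
      exponentSet M p (piP p m') ⊆ exponentSet M p (piP p m) :=
  (hcomp.2 p hp hdvd _ ⟨m, hm, rfl⟩).subset_or_subset (hcomp.2 p hp hdvd _ ⟨m', hm', rfl⟩)

theorem factorization_mem_exponentSet {p m : ℕ} (hm : m ∈ M) :
    m.factorization p ∈ exponentSet M p (piP p m) := by
  rwa [exponentSet, Set.mem_ofPred_eq, piP_mul_pow_factorization]

/-- The largest of the three (nested) columns works. -/
theorem FinsetCompatible.exists_common_column (hcomp : FinsetCompatible P exc M)
    {p : ℕ} (hp : p.Prime) (hdvd : ∃ a ∈ M, p ∣ a) {x y w : ℕ}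
    (hx : x ∈ M) (hy : y ∈ M) (hw : w ∈ M) :
    ∃ z ∈ M, piP p z * p ^ x.factorization p ∈ M ∧ piP p z * p ^ y.factorization p ∈ M ∧
      piP p z * p ^ w.factorization p ∈ M := by
  have hsup : ∀ a ∈ M, ∀ b ∈ M, ∃ z ∈ M, exponentSet M p (piP p a) ⊆ exponentSet M p (piP p z) ∧
      exponentSet M p (piP p b) ⊆ exponentSet M p (piP p z) := fun a ha b hb =>
    (hcomp.exponentSet_subset_or_subset hp hdvd ha hb).elim
      (fun h => ⟨b, hb, h, subset_rfl⟩) (fun h => ⟨a, ha, subset_rfl, h⟩)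
  obtain ⟨z₁, hz₁, hxz₁, hyz₁⟩ := hsup x hx y hy
  obtain ⟨z, hz, hz₁z, hwz⟩ := hsup z₁ hz₁ w hw
  exact ⟨z, hz, hz₁z (hxz₁ (factorization_mem_exponentSet hx)),
    hz₁z (hyz₁ (factorization_mem_exponentSet hy)), hwz (factorization_mem_exponentSet hw)⟩

theorem pEdge_or_pEdge_piP_mul_pow {q m k : ℕ} (hq : q.Prime) (hk : k ≠ m.factorization q) :
    PEdge q m (piP q m * q ^ k) ∨ PEdge q (piP q m * q ^ k) m := by
  have hcol := piP_mul_pow_factorization q m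
  rcases hk.lt_or_gt with h | h
  · have hedge := pEdge_mul_pow hq (piP q m) h
    rw [hcol] at hedge
    exact Or.inl hedge
  · have hedge := pEdge_mul_pow hq (piP q m) h
    rw [hcol] at hedge
    exact Or.inr hedge

/-- Change the exponents one prime `q ∈ Q` at a time: as the `q`-columns of `m` and `m'` are
nested, one of the two intermediate points `π_q(m) q^{v_q m'}`, `π_q(m') q^{v_q m}` lies in `M`. -/
theorem FinsetCompatible.reachable_of_factorization_eq_off (hcomp : FinsetCompatible P exc M)
    (h0 : 0 ∉ M) {G : SimpleGraph {x // x ∈ M}} {Q : Finset ℕ} (hQ : ∀ q ∈ Q, q.Prime)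
    (hG : ∀ q ∈ Q, ∀ m (hm : m ∈ M) k (hk : piP q m * q ^ k ∈ M), k ≠ m.factorization q →
      G.Adj ⟨m, hm⟩ ⟨piP q m * q ^ k, hk⟩)
    {m m' : ℕ} (hm : m ∈ M) (hm' : m' ∈ M)
    (h : ∀ r ∉ Q, m.factorization r = m'.factorization r) :
    G.Reachable ⟨m, hm⟩ ⟨m', hm'⟩ := by
  induction Q using Finset.induction_on generalizing m m' with
  | empty =>
    obtain rfl : m = m' := Nat.factorization_inj (ne_of_mem_of_not_mem hm h0)
      (ne_of_mem_of_not_mem hm' h0) (Finsupp.ext fun r => h r (Finset.notMem_empty r))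
    rfl
  | @insert q Q hqQ ih =>
    have hq := hQ q (Finset.mem_insert_self q Q)
    have hQ' := fun r hr => hQ r (Finset.mem_insert_of_mem hr)
    have hG' := fun r hr => hG r (Finset.mem_insert_of_mem hr)
    by_cases hv : m.factorization q = m'.factorization q
    · refine ih hQ' hG' hm hm' fun r hr => ?_
      by_cases hrq : r = q
      · rwa [hrq]
      · exact h r (by simp [hrq, hr])
    wlog hu : piP q m * q ^ m'.factorization q ∈ M generalizing m m'
    · have hdvd : ∃ a ∈ M, q ∣ a := by
        by_cases hmq : m.factorization q = 0
        · exact ⟨m', hm', Nat.dvd_of_factorization_pos (hmq ▸ Ne.symm hv)⟩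
        · exact ⟨m, hm, Nat.dvd_of_factorization_pos hmq⟩
      have hu' : piP q m' * q ^ m.factorization q ∈ M := by
        rcases hcomp.exponentSet_subset_or_subset hq hdvd hm hm' with hsub | hsub
        · exact hsub (factorization_mem_exponentSet hm)
        · exact absurd (hsub (factorization_mem_exponentSet hm')) hu
      exact (this hm' hm (fun r hr => (h r hr).symm) (Ne.symm hv) hu').symm
    have hm0 := ne_of_mem_of_not_mem hm h0
    refine (hG q (Finset.mem_insert_self q Q) m hm _ hu (Ne.symm hv)).reachable.trans
      (ih hQ' hG' hu hm' fun r hr => ?_)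
    rw [factorization_piP_mul_pow hq hm0, Finsupp.update_apply]
    split_ifs with hrq
    · rw [hrq]
    · exact h r (by simp [hrq, hr])

end Columns

theorem _root_.SimpleGraph.ConnectedComponent.eq_or_eq_or_eq_of_reachable {V : Type*}
    {G : SimpleGraph V} (f : V → Prop) (hf : ∀ a b, (f a ↔ f b) → G.Reachable a b)
    (c₁ c₂ c₃ : G.ConnectedComponent) : c₁ = c₂ ∨ c₁ = c₃ ∨ c₂ = c₃ := by
  induction c₁ using ConnectedComponent.ind with | h a =>
  induction c₂ using ConnectedComponent.ind with | h b =>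
  induction c₃ using ConnectedComponent.ind with | h c =>
  simp only [ConnectedComponent.eq]
  have := hf a b
  have := hf a c
  have := hf b c
  tauto

section Graphs

variable {M P : Finset ℕ} {exc : ℕ → ExcellentOrder}

theorem planeGraph_le_fullGraph (M : Finset ℕ) (p : ℕ) : planeGraph M p ≤ fullGraph M :=
  fun _ _ h => ⟨h.1, h.2.imp And.left And.left⟩

theorem planeGraph_le_spGraph (M : Finset ℕ) (p : ℕ) : planeGraph M p ≤ spGraph M p :=
  fun _ _ h =>
    ⟨h.1, h.2.imp (fun h => ⟨h.1, fun hH => h.2 hH.1⟩) (fun h => ⟨h.1, fun hH => h.2 hH.1⟩)⟩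

theorem piP_mul_pow_ne_self {q m k : ℕ} (hq : q.Prime) (hm : m ≠ 0) (hk : k ≠ m.factorization q) :
    piP q m * q ^ k ≠ m :=
  fun h => hk (by rw [← factorization_piP_mul_pow_self hq hm k, h])

theorem fullGraph_adj_piP_mul_pow (h0 : 0 ∉ M) {q m k : ℕ} (hq : q.Prime) (hm : m ∈ M)
    (hk : piP q m * q ^ k ∈ M) (hkm : k ≠ m.factorization q) :
    (fullGraph M).Adj ⟨m, hm⟩ ⟨piP q m * q ^ k, hk⟩ := by
  have hm0 := ne_of_mem_of_not_mem hm h0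
  refine ⟨fun h => piP_mul_pow_ne_self hq hm0 hkm (congrArg Subtype.val h).symm, ?_⟩
  exact (pEdge_or_pEdge_piP_mul_pow hq hkm).imp (⟨q, ·⟩) (⟨q, ·⟩)

theorem planeGraph_adj_piP_mul_pow (h0 : 0 ∉ M) {p q m k : ℕ} (hq : q.Prime) (hqp : q ≠ p)
    (hm : m ∈ M) (hk : piP q m * q ^ k ∈ M) (hkm : k ≠ m.factorization q) :
    (planeGraph M p).Adj ⟨m, hm⟩ ⟨piP q m * q ^ k, hk⟩ := by
  have hm0 := ne_of_mem_of_not_mem hm h0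
  have hu0 := ne_of_mem_of_not_mem hk h0
  have hfac := factorization_piP_mul_pow_self hq hm0 k
  refine ⟨fun h => piP_mul_pow_ne_self hq hm0 hkm (congrArg Subtype.val h).symm, ?_⟩
  exact (pEdge_or_pEdge_piP_mul_pow hq hkm).imp
    (fun h => ⟨⟨q, h⟩, fun hp => hkm (by rw [← hfac, hp.factorization_eq_of_ne hu0 hqp])⟩)
    (fun h => ⟨⟨q, h⟩, fun hp => hkm (by rw [← hfac, hp.factorization_eq_of_ne hm0 hqp])⟩)

theorem factorization_eq_of_planeGraph_adj (h0 : 0 ∉ M) {p : ℕ} {a b : {x // x ∈ M}}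
    (h : (planeGraph M p).Adj a b) : (a : ℕ).factorization p = (b : ℕ).factorization p := by
  have hne : ∀ {x y : ℕ}, y ∈ M → GEdge x y ∧ ¬ PEdge p x y →
      x.factorization p = y.factorization p := by
    rintro x y hy ⟨⟨q, hq⟩, hnp⟩
    exact hq.factorization_eq_of_ne (ne_of_mem_of_not_mem hy h0) (by rintro rfl; exact hnp hq)
  exact h.2.elim (hne b.2) (fun h => (hne a.2 h).symm)

theorem factorization_eq_of_planeGraph_reachable (h0 : 0 ∉ M) {p : ℕ} {a b : {x // x ∈ M}}
    (h : (planeGraph M p).Reachable a b) : (a : ℕ).factorization p = (b : ℕ).factorization p := by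
  obtain ⟨w⟩ := h
  induction w with
  | nil => rfl
  | cons hadj _ ih => exact (factorization_eq_of_planeGraph_adj h0 hadj).trans ih

theorem FinsetCompatible.planeGraph_reachable_iff (hcomp : FinsetCompatible P exc M)
    (h0 : 0 ∉ M) {p m m' : ℕ} (hm : m ∈ M) (hm' : m' ∈ M) :
    (planeGraph M p).Reachable ⟨m, hm⟩ ⟨m', hm'⟩ ↔ m.factorization p = m'.factorization p := by
  refine ⟨factorization_eq_of_planeGraph_reachable h0, fun h => ?_⟩
  set Q := (m.primeFactors ∪ m'.primeFactors).erase p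
  have hQ : ∀ q ∈ Q, q.Prime ∧ q ≠ p := fun q hq => by
    obtain ⟨hqp, hq⟩ := Finset.mem_erase.mp hq
    exact ⟨(Finset.mem_union.mp hq).elim Nat.prime_of_mem_primeFactors
      Nat.prime_of_mem_primeFactors, hqp⟩
  refine hcomp.reachable_of_factorization_eq_off h0 (fun q hq => (hQ q hq).1)
    (fun q hq _ hm _ hk hkm => planeGraph_adj_piP_mul_pow h0 (hQ q hq).1 (hQ q hq).2 hm hk hkm)
    hm hm' fun r hr => ?_
  by_cases hrp : r = p
  · rwa [hrp]
  · simp only [Q, Finset.mem_erase, ne_eq, hrp, not_false_eq_true, true_and, Finset.mem_union,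
      not_or] at hr
    rw [Finsupp.notMem_support_iff.mp hr.1, Finsupp.notMem_support_iff.mp hr.2]

theorem FinsetCompatible.fullGraph_connected (hcomp : FinsetCompatible P exc M)
    (hM : M.Nonempty) (h0 : 0 ∉ M) : (fullGraph M).Connected := by
  have : Nonempty {x // x ∈ M} := hM.to_subtype
  refine ⟨fun ⟨m, hm⟩ ⟨m', hm'⟩ => ?_⟩
  set Q := m.primeFactors ∪ m'.primeFactors
  have hQ : ∀ q ∈ Q, q.Prime := fun q hq =>
    (Finset.mem_union.mp hq).elim Nat.prime_of_mem_primeFactors Nat.prime_of_mem_primeFactors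
  refine hcomp.reachable_of_factorization_eq_off h0 hQ
    (fun q hq _ hm _ hk hkm => fullGraph_adj_piP_mul_pow h0 (hQ q hq) hm hk hkm)
    hm hm' fun r hr => ?_
  simp only [Q, Finset.mem_union, not_or] at hr
  rw [Finsupp.notMem_support_iff.mp hr.1, Finsupp.notMem_support_iff.mp hr.2]

end Graphs

section Levels

variable {M P : Finset ℕ} {exc : ℕ → ExcellentOrder} {p : ℕ}

/-- The element `c * p ^ k` above the source makes the `p`-edge not highest. -/
theorem spGraph_adj_mul_pow (h0 : 0 ∉ M) (hp : p.Prime) {c i j k : ℕ} (hi : c * p ^ i ∈ M)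
    (hj : c * p ^ j ∈ M) (hk : c * p ^ k ∈ M) (hij : i < j) (hjk : j < k) :
    (spGraph M p).Adj ⟨c * p ^ j, hj⟩ ⟨c * p ^ i, hi⟩ := by
  have hedge := pEdge_mul_pow hp c hij
  refine ⟨fun h => hedge.ne (ne_of_mem_of_not_mem hi h0) (congrArg Subtype.val h), Or.inl ?_⟩
  exact ⟨⟨p, hedge⟩, fun hH => hH.2 _ hk (pEdge_mul_pow hp c hjk)⟩

theorem FinsetCompatible.spGraph_reachable_of_lt (hcomp : FinsetCompatible P exc M)
    (h0 : 0 ∉ M) (hp : p.Prime) {x y a : ℕ} (hx : x ∈ M) (hy : y ∈ M) (ha : a ∈ M)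
    (hxy : x.factorization p < y.factorization p) (hya : y.factorization p < a.factorization p) :
    (spGraph M p).Reachable ⟨x, hx⟩ ⟨y, hy⟩ := by
  have hdvd : ∃ b ∈ M, p ∣ b := ⟨a, ha, Nat.dvd_of_factorization_pos (by omega)⟩
  obtain ⟨z, hz, hxz, hyz, haz⟩ := hcomp.exists_common_column hp hdvd hx hy ha
  have hz0 := ne_of_mem_of_not_mem hz h0
  have hx' : (planeGraph M p).Reachable ⟨x, hx⟩ ⟨_, hxz⟩ := by
    rw [hcomp.planeGraph_reachable_iff h0, factorization_piP_mul_pow_self hp hz0]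
  have hy' : (planeGraph M p).Reachable ⟨y, hy⟩ ⟨_, hyz⟩ := by
    rw [hcomp.planeGraph_reachable_iff h0, factorization_piP_mul_pow_self hp hz0]
  exact (hx'.mono (planeGraph_le_spGraph M p)).trans <|
    (spGraph_adj_mul_pow h0 hp hxz hyz haz hxy hya).reachable.symm.trans <|
    hy'.symm.mono (planeGraph_le_spGraph M p)

/-- The vertices of top `p`-level form one component and those below it at most one more. -/
theorem FinsetCompatible.propS (hcomp : FinsetCompatible P exc M) (hM : M.Nonempty)
    (h0 : 0 ∉ M) (hp : p.Prime) : PropS M p := by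
  obtain ⟨a, ha, hmax⟩ := M.exists_max_image (·.factorization p) hM
  refine ConnectedComponent.eq_or_eq_or_eq_of_reachable
    (fun x => (x : ℕ).factorization p = a.factorization p) fun ⟨x, hx⟩ ⟨y, hy⟩ hxy => ?_
  have hxa := hmax x hx
  have hya := hmax y hy
  simp only at hxy hxa hya
  rcases lt_trichotomy (x.factorization p) (y.factorization p) with h | h | h
  · exact hcomp.spGraph_reachable_of_lt h0 hp hx hy ha h (by omega)
  · exact ((hcomp.planeGraph_reachable_iff h0 hx hy).mpr h).mono (planeGraph_le_spGraph M p)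
  · exact (hcomp.spGraph_reachable_of_lt h0 hp hy hx ha h (by omega)).symm

/-- The unique highest `p`-plane is the top level: every lower level contains the target of a
`p`-edge coming down a column from the top level. -/
theorem FinsetCompatible.propT (hcomp : FinsetCompatible P exc M) (hM : M.Nonempty)
    (h0 : 0 ∉ M) (hp : p.Prime) : PropT M p := by
  obtain ⟨a, ha, hmax⟩ := M.exists_max_image (·.factorization p) hM
  refine ⟨(planeGraph M p).connectedComponentMk ⟨a, ha⟩, ?_, ?_⟩
  · intro m₁ h₁ m₂ h₂ hedge hm₂
    have hlevel := (hcomp.planeGraph_reachable_iff h0 h₂ ha).mp (ConnectedComponent.exact hm₂)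
    have := hedge.factorization_lt (ne_of_mem_of_not_mem h₂ h0)
    have := hmax m₁ h₁
    omega
  · intro c hc
    induction c using ConnectedComponent.ind with | h x =>
    obtain ⟨x, hx⟩ := x
    refine ConnectedComponent.sound ((hcomp.planeGraph_reachable_iff h0 hx ha).mpr ?_)
    by_contra hne
    have hxa : x.factorization p < a.factorization p := (hmax x hx).lt_of_ne hne
    have hdvd : ∃ b ∈ M, p ∣ b := ⟨a, ha, Nat.dvd_of_factorization_pos (by omega)⟩
    obtain ⟨z, hz, hxz, -, haz⟩ := hcomp.exists_common_column hp hdvd hx hx ha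
    refine hc _ haz _ hxz (pEdge_mul_pow hp _ hxa) (ConnectedComponent.sound ?_)
    rw [hcomp.planeGraph_reachable_iff h0,
      factorization_piP_mul_pow_self hp (ne_of_mem_of_not_mem hz h0)]

end Levels

theorem statement1_general (M : Finset ℕ) (hM : M.Nonempty) (h0 : 0 ∉ M)
    (P : Finset ℕ)
    (exc : ℕ → ExcellentOrder)
    (hcomp : FinsetCompatible P exc M) :
    (fullGraph M).Connected ∧ (∀ p : ℕ, p.Prime → PropS M p) ∧ ConditionI M :=
  have hconn := hcomp.fullGraph_connected hM h0
  have hS : ∀ p : ℕ, p.Prime → PropS M p := fun _ hp => hcomp.propS hM h0 hp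
  ⟨hconn, hS, hconn, hS 2 Nat.prime_two, fun _ hp _ => hcomp.propT hM h0 hp⟩

/-- Lemma 2.7 (b). -/
theorem statement1 (M : Finset ℕ) (hM : M.Nonempty) (h0 : 0 ∉ M)
    (P : Finset ℕ) (hP : ∀ p ∈ P, p.Prime)
    (hPM : ∀ p : ℕ, p.Prime → (∃ m ∈ M, p ∣ m) → p ∈ P)
    (exc : ℕ → ExcellentOrder)
    (hcomp : FinsetCompatible P exc M) :
    (fullGraph M).Connected ∧ (∀ p : ℕ, p.Prime → PropS M p) ∧ ConditionI M :=
  statement1_general M hM h0 P exc hcomp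

end WeightPaper
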